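/- arXiv:1404.3328 — 3 statements merged into one kernel-verified Lean document; each statement's English description precedes it below -/
import Mathlib

section
/- Let $\pi$ be a probability vector, and for each action $a$ define $T(\pi,y,a) = B^a_y P_a' \pi / \sigma(\pi,y,a)$ with $\sigma(\pi,y,a) = \mathbf{1}' B^a_y P_a' \pi > 0$, where $B^a_y = \mathrm{diag}(b^a_{1,y},\dots,b^a_{X,y})$. If for all $m, n, j$: $\pi(m)\pi(n)\big(b^a_{j,y}b^{a+1}_{j+1,y}p^{a}_{m,j}p^{a+1}_{n,j+1} - b^a_{j+1,y}b^{a+1}_{j,y}p^{a}_{m,j+1}p^{a+1}_{n,j}\big)$ summed over $m,n$ is nonnegative for each $j$ (i.e., $\pi'\Gamma^{j,a,y}\pi \ge 0$ for all $j$), then $T(\pi,y,a+1) \ge_r T(\pi,y,a)$. -/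
/-- Copositivity of the matrices `Γ^{j,a,y}` on the belief `π` implies that the
Bayesian update under action `a+1` MLR dominates the update under action `a`. -/
theorem copositive_implies_update_mlr {X : ℕ} (π : Fin X → ℝ)
    (hπnonneg : ∀ i, 0 ≤ π i) (hπsum : ∑ i, π i = 1)
    (p q : Fin X → Fin X → ℝ)  -- transition probabilities for actions a, a+1
    (hp : ∀ i j, 0 ≤ p i j) (hq : ∀ i j, 0 ≤ q i j)
    (b c : Fin X → ℝ)  -- observation likelihoods b^a_{·,y}, b^{a+1}_{·,y}
    (hb : ∀ j, 0 ≤ b j) (hc : ∀ j, 0 ≤ c j)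
    (hσ1 : 0 < ∑ j, b j * ∑ i, π i * p i j)
    (hσ2 : 0 < ∑ j, c j * ∑ i, π i * q i j)
    (hΓ : ∀ j l : Fin X, j < l →
      0 ≤ ∑ m, ∑ n, π m * π n *
        (b j * c l * p m j * q n l - b l * c j * p m l * q n j)) :
    ∀ j l : Fin X, j < l →
      (c j * (∑ i, π i * q i j) / ∑ j', c j' * ∑ i, π i * q i j') *
        (b l * (∑ i, π i * p i l) / ∑ j', b j' * ∑ i, π i * p i j') ≤
      (c l * (∑ i, π i * q i l) / ∑ j', c j' * ∑ i, π i * q i j') *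
        (b j * (∑ i, π i * p i j) / ∑ j', b j' * ∑ i, π i * p i j') := by
  intro j l hjl
  have e : ∀ (u v : Fin X → ℝ),
      (∑ m, π m * u m) * (∑ n, π n * v n) = ∑ m, ∑ n, π m * π n * (u m * v n) := by
    intro u v
    rw [Finset.sum_mul_sum]
    exact Finset.sum_congr rfl fun m _ => Finset.sum_congr rfl fun n _ => by ring
  have key : c j * (∑ i, π i * q i j) * (b l * (∑ i, π i * p i l)) ≤
      c l * (∑ i, π i * q i l) * (b j * (∑ i, π i * p i j)) := by
    have h := hΓ j l hjl
    have h' : 0 ≤ b j * c l * ((∑ m, π m * p m j) * (∑ n, π n * q n l)) -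
        b l * c j * ((∑ m, π m * p m l) * (∑ n, π n * q n j)) := by
      convert h using 1
      rw [e, e]
      simp only [Finset.mul_sum, ← Finset.sum_sub_distrib]
      exact Finset.sum_congr rfl fun m _ =>
        Finset.sum_congr rfl fun n _ => by ring
    nlinarith [h']
  rw [div_mul_div_comm, div_mul_div_comm]
  exact div_le_div_of_nonneg_right key (by positivity)
end

section
/- Let $Q : \{1,\dots,A\} \to \mathbb{R}$ and $g : \{1,\dots,A\} \to \mathbb{R}$ satisfy $Q(a) - g(a) \le Q(a+1) - g(a+1)$ for all $a < A$. Then the smallest minimizer of $Q$ is less than or equal to the smallest minimizer of $g$. -/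
lemma step_mono_chain {A : ℕ} (f : Fin A → ℝ)
    (h : ∀ (a : Fin A) (h : a.val + 1 < A), f a ≤ f ⟨a.val + 1, h⟩) :
    ∀ a b : Fin A, a ≤ b → f a ≤ f b := by
  intro a b hab
  obtain ⟨n, hn⟩ : ∃ n, b.val = a.val + n := Nat.exists_eq_add_of_le hab
  induction n generalizing b with
  | zero => have : a = b := Fin.ext (by omega); simp [this]
  | succ n ih =>
    have hA : a.val + n + 1 < A := hn ▸ b.isLt
    have hb : b = ⟨a.val + n + 1, hA⟩ := Fin.ext hn
    calc f a ≤ f ⟨a.val + n, by omega⟩ :=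
          ih ⟨a.val + n, by omega⟩ (by simp [Fin.le_def]) rfl
      _ ≤ f b := le_of_le_of_eq (h ⟨a.val + n, by omega⟩ hA) (congrArg f hb.symm)

/-- Lovejoy's comparison lemma: if `Q - g` is increasing along consecutive
actions, then the smallest minimizer of `Q` is at most that of `g`. -/
theorem smallest_argmin_le {A : ℕ} (Q g : Fin A → ℝ)
    (hmono : ∀ (a : Fin A) (h : a.val + 1 < A),
      Q a - g a ≤ Q ⟨a.val + 1, h⟩ - g ⟨a.val + 1, h⟩)
    (aQ ag : Fin A)
    (haQ : IsLeast {a : Fin A | ∀ b, Q a ≤ Q b} aQ)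
    (hag : IsLeast {a : Fin A | ∀ b, g a ≤ g b} ag) :
    aQ ≤ ag := by
  by_contra hlt
  push_neg at hlt
  have hle : ag ≤ aQ := le_of_lt hlt
  have h1 : Q ag - g ag ≤ Q aQ - g aQ :=
    step_mono_chain (fun a => Q a - g a) hmono ag aQ hle
  have h2 : Q aQ ≤ Q ag := haQ.1 ag
  have h3 : g ag ≤ g aQ := hag.1 aQ
  have hQeq : Q ag = Q aQ := by linarith
  have : aQ ≤ ag := haQ.2 (fun b => hQeq ▸ haQ.1 b)
  exact absurd this (not_le.mpr hlt)
end

section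
/- Consider the Bellman operator for an infinite-horizon discounted POMDP: $Q(\pi,a) = c_a'\pi + \rho \sum_y V(T(\pi,y,a))\sigma(\pi,y,a)$, $V(\pi) = \min_a Q(\pi,a)$. Fix any vector $\phi \in \mathbb{R}^X$ and define transformed costs $\overline C_a = c_a + (I - \rho P_a)\phi$. Then the value function $\overline V$ of the POMDP with costs $\overline C_a$ satisfies $\overline V(\pi) = V(\pi) + \phi'\pi$ for all beliefs $\pi$, and the transformed $\overline Q$ satisfies $\overline Q(\pi,a) = Q(\pi,a) + \phi'\pi$; consequently the set of minimizing actions (optimal policy) is unchanged. -/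
private lemma inf'_add_const' {α : Type*} (s : Finset α) (hs : s.Nonempty)
    (f : α → ℝ) (K : ℝ) :
    s.inf' hs (fun a => f a + K) = s.inf' hs f + K := by
  apply le_antisymm
  · obtain ⟨a, ha, hfa⟩ := s.exists_mem_eq_inf' hs f
    calc s.inf' hs (fun a => f a + K) ≤ f a + K := Finset.inf'_le _ ha
    _ = s.inf' hs f + K := by rw [hfa]
  · apply Finset.le_inf'
    intro a ha
    have h := Finset.inf'_le (s := s) f ha
    linarith [h]

/-- Transforming the costs by `C̄_a = c_a + (I - ρ P_a)φ` shifts the value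
function and Q-function by `φ'π` at every stage of value iteration, and hence
leaves the set of minimizing actions (the optimal policy) unchanged. -/
theorem cost_transform_preserves_policy {X Y A : ℕ} [NeZero A]
    (P : Fin A → Fin X → Fin X → ℝ)
    (hPnonneg : ∀ a i j, 0 ≤ P a i j) (hProw : ∀ a i, ∑ j, P a i j = 1)
    (b : Fin A → Fin X → Fin Y → ℝ)
    (hbnonneg : ∀ a j y, 0 ≤ b a j y) (hbrow : ∀ a j, ∑ y, b a j y = 1)
    (c : Fin A → Fin X → ℝ) (ρ : ℝ) (hρ0 : 0 ≤ ρ) (hρ1 : ρ < 1)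
    (φ : Fin X → ℝ)
    (σ : (Fin X → ℝ) → Fin Y → Fin A → ℝ)
    (hσ : ∀ π y a, σ π y a = ∑ j, b a j y * ∑ i, π i * P a i j)
    (hσpos : ∀ π y a, (∀ i, 0 ≤ π i) → (∑ i, π i = 1) → 0 < σ π y a)
    (T : (Fin X → ℝ) → Fin Y → Fin A → Fin X → ℝ)
    (hT : ∀ π y a j, T π y a j = b a j y * (∑ i, π i * P a i j) / σ π y a)
    (Cb : Fin A → Fin X → ℝ)
    (hCb : ∀ a i, Cb a i = c a i + (φ i - ρ * ∑ j, P a i j * φ j))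
    (V Vb : ℕ → (Fin X → ℝ) → ℝ)
    (Q Qb : ℕ → (Fin X → ℝ) → Fin A → ℝ)
    (hQ : ∀ n π a, Q n π a = (∑ i, c a i * π i) + ρ * ∑ y, V n (T π y a) * σ π y a)
    (hQb : ∀ n π a, Qb n π a = (∑ i, Cb a i * π i) + ρ * ∑ y, Vb n (T π y a) * σ π y a)
    (hV0 : ∀ π, V 0 π = 0)
    (hVb0 : ∀ π, Vb 0 π = ∑ i, φ i * π i)
    (hVs : ∀ n π, V (n + 1) π = Finset.univ.inf' Finset.univ_nonempty (Q n π))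
    (hVbs : ∀ n π, Vb (n + 1) π = Finset.univ.inf' Finset.univ_nonempty (Qb n π)) :
    ∀ (n : ℕ) (π : Fin X → ℝ), (∀ i, 0 ≤ π i) → (∑ i, π i = 1) →
      Vb n π = V n π + ∑ i, φ i * π i ∧
      (∀ a, Qb n π a = Q n π a + ∑ i, φ i * π i) ∧
      {a : Fin A | ∀ a', Qb n π a ≤ Qb n π a'} =
        {a : Fin A | ∀ a', Q n π a ≤ Q n π a'} := by
  -- T produces beliefs
  have hTnn : ∀ π y a, (∀ i, 0 ≤ π i) → (∑ i, π i = 1) → ∀ j, 0 ≤ T π y a j := by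
    intro π y a h1 h2 j
    rw [hT]
    apply div_nonneg
    · exact mul_nonneg (hbnonneg a j y)
        (Finset.sum_nonneg fun i _ => mul_nonneg (h1 i) (hPnonneg a i j))
    · exact (hσpos π y a h1 h2).le
  have hTsum : ∀ π y a, (∀ i, 0 ≤ π i) → (∑ i, π i = 1) → ∑ j, T π y a j = 1 := by
    intro π y a h1 h2
    have hσne := (hσpos π y a h1 h2).ne'
    have : ∑ j, T π y a j = (∑ j, b a j y * ∑ i, π i * P a i j) / σ π y a := by
      rw [Finset.sum_div]; exact Finset.sum_congr rfl fun j _ => hT π y a j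
    rw [this, ← hσ, div_self hσne]
  -- key identity: ∑_y (φ' T) σ = ∑_j φ_j s_j
  have hkey : ∀ π a, (∀ i, 0 ≤ π i) → (∑ i, π i = 1) →
      (∑ y, (∑ i, φ i * T π y a i) * σ π y a)
        = ∑ j, φ j * ∑ i, π i * P a i j := by
    intro π a h1 h2
    have step : ∀ y, (∑ i, φ i * T π y a i) * σ π y a
        = ∑ j, φ j * (b a j y * ∑ i, π i * P a i j) := by
      intro y
      have hσne := (hσpos π y a h1 h2).ne'
      rw [Finset.sum_mul]
      refine Finset.sum_congr rfl fun j _ => ?_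
      rw [hT]
      field_simp
    simp only [step]
    rw [Finset.sum_comm]
    refine Finset.sum_congr rfl fun j _ => ?_
    rw [← Finset.mul_sum, ← Finset.sum_mul, hbrow, one_mul]
  -- Q difference given V difference at level n
  have hQdiff : ∀ n, (∀ π, (∀ i, 0 ≤ π i) → (∑ i, π i = 1) →
        Vb n π = V n π + ∑ i, φ i * π i) →
      ∀ π, (∀ i, 0 ≤ π i) → (∑ i, π i = 1) →
      ∀ a, Qb n π a = Q n π a + ∑ i, φ i * π i := by
    intro n HV π h1 h2 a
    have hVbT : ∀ y, Vb n (T π y a) = V n (T π y a) + ∑ i, φ i * T π y a i :=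
      fun y => HV _ (hTnn π y a h1 h2) (hTsum π y a h1 h2)
    rw [hQb, hQ]
    have hsum : ∑ y, Vb n (T π y a) * σ π y a
        = (∑ y, V n (T π y a) * σ π y a)
          + ∑ y, (∑ i, φ i * T π y a i) * σ π y a := by
      rw [← Finset.sum_add_distrib]
      exact Finset.sum_congr rfl fun y _ => by rw [hVbT]; ring
    have hswap : ∑ i, π i * ∑ j, P a i j * φ j
        = ∑ j, φ j * ∑ i, π i * P a i j := by
      simp_rw [Finset.mul_sum]
      rw [Finset.sum_comm]
      exact Finset.sum_congr rfl fun j _ => Finset.sum_congr rfl fun i _ => by ring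
    have hCsum : ∑ i, Cb a i * π i
        = (∑ i, c a i * π i) + (∑ i, φ i * π i)
          - ρ * ∑ j, φ j * ∑ i, π i * P a i j := by
      calc ∑ i, Cb a i * π i
          = ∑ i, (c a i * π i + φ i * π i - ρ * (π i * ∑ j, P a i j * φ j)) :=
            Finset.sum_congr rfl fun i _ => by rw [hCb]; ring
        _ = _ := by
            rw [Finset.sum_sub_distrib, Finset.sum_add_distrib, ← Finset.mul_sum,
              hswap]
    rw [hsum, hCsum, hkey π a h1 h2]
    ring
  -- main induction on V difference
  have HV : ∀ n π, (∀ i, 0 ≤ π i) → (∑ i, π i = 1) →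
      Vb n π = V n π + ∑ i, φ i * π i := by
    intro n
    induction n with
    | zero => intro π h1 h2; rw [hV0, hVb0]; ring
    | succ n ih =>
      intro π h1 h2
      rw [hVs, hVbs]
      have : Qb n π = fun a => Q n π a + ∑ i, φ i * π i := by
        funext a; exact hQdiff n ih π h1 h2 a
      rw [this, inf'_add_const']
  -- conclude
  intro n π h1 h2
  have hQd := hQdiff n (HV n) π h1 h2
  refine ⟨HV n π h1 h2, hQd, ?_⟩
  ext a
  simp only [Set.mem_setOf_eq, hQd]
  exact forall_congr' fun a' => by constructor <;> intro h <;> linarith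
end
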